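/- Let R be a commutative noetherian ring, A a finite R-algebra that is projective as an R-module, and ω := Hom_R(A,R). Then Ext^i_A(ω, ω) = 0 for all i ≥ 1, where Ext is computed in the category of left A-modules; similarly Ext^i(ω, ω) = 0 for all i ≥ 1 in the category of right A-modules. -/

import Mathlib

/-!
For an `A`-module `M`, `Hom_A(M, ω) ≅ Hom_R(M, R)` (evaluation at `1`). Let `P → ω` be a
projective resolution over `A`. Since `A` is `R`-projective, so is every `P n`, and `ω`, the
dual of a finite projective `R`-module, is `R`-projective as well; inductively every cokernel
`P n / im d` is `R`-projective, so the image of each differential is an `R`-direct summand.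
Hence `Hom_R(P, R) ≅ Hom_A(P, ω)` is exact in positive degrees. The statement for right modules
is the one for left `Aᵐᵒᵖ`-modules, since `Hom_R(A, R) ≅ Hom_R(Aᵐᵒᵖ, R)`.
-/

open CategoryTheory TensorProduct

noncomputable section

variable (R : Type) [CommRing R] (A : Type) [Ring A] [Algebra R A]

/-- The dualising bimodule `ω = Hom_R(A, R)` regarded as a left `A`-module,
with action `(a • f) x = f (x * a)`. -/
def OmegaLeft := A →ₗ[R] R

instance : AddCommGroup (OmegaLeft R A) := inferInstanceAs (AddCommGroup (A →ₗ[R] R))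

instance : FunLike (OmegaLeft R A) A R := inferInstanceAs (FunLike (A →ₗ[R] R) A R)

instance : LinearMapClass (OmegaLeft R A) R A R :=
  inferInstanceAs (LinearMapClass (A →ₗ[R] R) R A R)

instance : Module A (OmegaLeft R A) where
  smul a f := ((f : A →ₗ[R] R).comp (LinearMap.mulRight R a) : A →ₗ[R] R)
  one_smul f := DFunLike.ext _ _ fun x => by
    show ((f : A →ₗ[R] R).comp (LinearMap.mulRight R (1:A))) x = f x
    simp
    rfl
  mul_smul a b f := DFunLike.ext _ _ fun x => by
    show (f : A →ₗ[R] R) (x * (a * b)) = (f : A →ₗ[R] R) ((x * a) * b)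
    rw [mul_assoc]
  smul_zero a := DFunLike.ext _ _ fun x => rfl
  smul_add a f g := DFunLike.ext _ _ fun x => rfl
  add_smul a b f := DFunLike.ext _ _ fun x => by
    show (f : A →ₗ[R] R) (x * (a + b)) = (f : A →ₗ[R] R) (x * a) + (f : A →ₗ[R] R) (x * b)
    rw [mul_add, map_add]
  zero_smul f := DFunLike.ext _ _ fun x => by
    show (f : A →ₗ[R] R) (x * 0) = 0
    rw [mul_zero, map_zero]

@[simp] lemma OmegaLeft.smul_apply (a : A) (f : OmegaLeft R A) (x : A) :
    (a • f) x = f (x * a) := rfl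

/-- The dualising bimodule `ω = Hom_R(A, R)` regarded as a right `A`-module
(i.e. a left `Aᵐᵒᵖ`-module), with action `(f • b) x = f (b * x)`. -/
def OmegaRight := A →ₗ[R] R

instance : AddCommGroup (OmegaRight R A) := inferInstanceAs (AddCommGroup (A →ₗ[R] R))

instance : FunLike (OmegaRight R A) A R := inferInstanceAs (FunLike (A →ₗ[R] R) A R)

instance : LinearMapClass (OmegaRight R A) R A R :=
  inferInstanceAs (LinearMapClass (A →ₗ[R] R) R A R)

instance : Module Aᵐᵒᵖ (OmegaRight R A) where
  smul b f := ((f : A →ₗ[R] R).comp (LinearMap.mulLeft R b.unop) : A →ₗ[R] R)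
  one_smul f := DFunLike.ext _ _ fun x => by
    show (f : A →ₗ[R] R) ((1:A) * x) = f x
    rw [one_mul]
  mul_smul a b f := DFunLike.ext _ _ fun x => by
    show (f : A →ₗ[R] R) ((b.unop * a.unop) * x) = (f : A →ₗ[R] R) (b.unop * (a.unop * x))
    rw [mul_assoc]
  smul_zero a := DFunLike.ext _ _ fun x => rfl
  smul_add a f g := DFunLike.ext _ _ fun x => rfl
  add_smul a b f := DFunLike.ext _ _ fun x => by
    show (f : A →ₗ[R] R) ((a.unop + b.unop) * x)
        = (f : A →ₗ[R] R) (a.unop * x) + (f : A →ₗ[R] R) (b.unop * x)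
    rw [add_mul, map_add]
  zero_smul f := DFunLike.ext _ _ fun x => by
    show (f : A →ₗ[R] R) (0 * x) = 0
    rw [zero_mul, map_zero]

@[simp] lemma OmegaRight.smul_apply (b : Aᵐᵒᵖ) (f : OmegaRight R A) (x : A) :
    (b • f) x = f (b.unop * x) := rfl


/-- The Ext group `Ext^n_B(M, N)` in the category of left `B`-modules. -/
def extGrp (B : Type) [Ring B] (M N : ModuleCat.{0} B) (n : ℕ) : ModuleCat ℤ :=
  ((Ext ℤ (ModuleCat.{0} B) n).obj (Opposite.op M)).obj N

namespace Submodule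

variable {R M : Type*} [Ring R] [AddCommGroup M] [Module R M] {p : Submodule R M}

theorem exists_retraction_of_projective_quotient (hp : Module.Projective R (M ⧸ p)) :
    ∃ ρ : M →ₗ[R] p, ρ ∘ₗ p.subtype = LinearMap.id := by
  obtain ⟨t, ht⟩ := p.mkQ.exists_rightInverse_of_surjective p.range_mkQ
  have hmem (x : M) : x - t (p.mkQ x) ∈ p := by
    rw [← Quotient.mk_eq_zero, ← p.mkQ_apply, map_sub,
      ← LinearMap.comp_apply p.mkQ t, ht, LinearMap.id_apply, sub_self]
  refine ⟨LinearMap.codRestrict p (LinearMap.id - t ∘ₗ p.mkQ) hmem, ?_⟩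
  ext ⟨y, hy⟩
  simp [(Quotient.mk_eq_zero p).mpr hy]

theorem projective_of_projective_quotient [Module.Projective R M]
    (hp : Module.Projective R (M ⧸ p)) : Module.Projective R p :=
  let ⟨ρ, hρ⟩ := exists_retraction_of_projective_quotient hp
  .of_split _ ρ hρ

end Submodule

section Exact

variable {R M₂ M₁ M₀ N : Type*} [Ring R] [AddCommGroup M₂] [AddCommGroup M₁]
  [AddCommGroup M₀] [AddCommGroup N] [Module R M₂] [Module R M₁] [Module R M₀] [Module R N]

theorem LinearMap.exists_comp_eq_of_projective_quotient_range {b : M₂ →ₗ[R] M₁}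
    (hb : Module.Projective R (M₁ ⧸ range b)) (φ : M₂ →ₗ[R] N) (hφ : ker b ≤ ker φ) :
    ∃ ψ : M₁ →ₗ[R] N, ψ ∘ₗ b = φ := by
  obtain ⟨ρ, hρ⟩ := Submodule.exists_retraction_of_projective_quotient hb
  refine ⟨(ker b).liftQ φ hφ ∘ₗ b.quotKerEquivRange.symm.toLinearMap ∘ₗ ρ, ?_⟩
  ext x
  have hρb : ρ (b x) = ⟨b x, mem_range_self b x⟩ := LinearMap.congr_fun hρ (b.rangeRestrict x)
  simp [hρb, quotKerEquivRange_symm_apply_image]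

theorem Function.Exact.projective_quotient_range {b : M₂ →ₗ[R] M₁} {c : M₁ →ₗ[R] M₀}
    (hbc : Function.Exact b c) (hc : Module.Projective R (LinearMap.range c)) :
    Module.Projective R (M₁ ⧸ LinearMap.range b) :=
  .of_equiv (c.quotKerEquivRange.symm.trans
    (Submodule.quotEquivOfEq _ _ (LinearMap.exact_iff.mp hbc)))

theorem Module.Projective.quotient_range_of_exact {X : ℕ → Type*} [∀ n, AddCommGroup (X n)]
    [∀ n, Module R (X n)] [∀ n, Module.Projective R (X n)] [Module.Projective R M₀]
    (d : ∀ n, X (n + 1) →ₗ[R] X n) (ε : X 0 →ₗ[R] M₀) (hε : Function.Surjective ε)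
    (hε₀ : Function.Exact (d 0) ε) (hd : ∀ n, Function.Exact (d (n + 1)) (d n)) (n : ℕ) :
    Module.Projective R (X n ⧸ LinearMap.range (d n)) := by
  induction n with
  | zero =>
    exact hε₀.projective_quotient_range
      (.of_equiv (LinearEquiv.ofTop _ (LinearMap.range_eq_top.mpr hε)).symm)
  | succ k ih =>
    exact (hd k).projective_quotient_range (Submodule.projective_of_projective_quotient ih)

end Exact

theorem Module.Projective.trans (R S M : Type*) [CommRing R] [Ring S] [Algebra R S]
    [AddCommGroup M] [Module R M] [Module S M] [IsScalarTower R S M]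
    [Module.Projective R S] [Module.Projective S M] : Module.Projective R M := by
  classical
  obtain ⟨s, hs⟩ := Module.projective_def'.mp ‹Module.Projective S M›
  have : Module.Projective R (M →₀ S) := .of_equiv (finsuppLequivDFinsupp R).symm
  exact .of_split (s.restrictScalars R) ((Finsupp.linearCombination S id).restrictScalars R)
    (LinearMap.ext fun x => LinearMap.congr_fun hs x)

namespace OmegaLeft

variable {R A} {M₂ M₁ : Type*} [AddCommGroup M₂] [Module A M₂] [Module R M₂]
  [IsScalarTower R A M₂] [AddCommGroup M₁] [Module A M₁] [Module R M₁] [IsScalarTower R A M₁]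

theorem algebraMap_smul_apply (r : R) (f : OmegaLeft R A) (x : A) :
    (algebraMap R A r • f) x = r • f x := by
  rw [smul_apply, ← Algebra.commutes, ← Algebra.smul_def, map_smul]

theorem projective_of_linearEquiv {M : Type*} [AddCommGroup M] [Module A M] [Module R M]
    [IsScalarTower R A M] [Module.Finite R A] [Module.Projective R A]
    (e : M ≃ₗ[A] OmegaLeft R A) : Module.Projective R M :=
  let e' : M ≃ₗ[R] Module.Dual R A :=
    { toFun := fun m => (e m : A →ₗ[R] R)
      invFun := fun f => e.symm f
      map_add' := fun x y => by rw [map_add]; rfl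
      map_smul' := fun r m => LinearMap.ext fun x => by
        show e (r • m) x = r • e m x
        rw [← algebraMap_smul A r m, map_smul, algebraMap_smul_apply]
      left_inv := e.symm_apply_apply
      right_inv := e.apply_symm_apply }
  .of_equiv e'.symm

def homEquiv : (M₁ →ₗ[A] OmegaLeft R A) ≃ (M₁ →ₗ[R] R) where
  toFun φ :=
    { toFun := fun m => φ m 1
      map_add' := fun x y => by rw [map_add]; rfl
      map_smul' := fun r m => by
        rw [← algebraMap_smul A r m, map_smul, algebraMap_smul_apply]
        rfl }
  invFun ψ :=
    { toFun := fun m => (ψ ∘ₗ (LinearMap.toSpanSingleton A M₁ m).restrictScalars R : A →ₗ[R] R)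
      map_add' := fun x y => LinearMap.ext fun a => by
        show ψ (a • (x + y)) = ψ (a • x) + ψ (a • y)
        rw [smul_add, map_add]
      map_smul' := fun a m => LinearMap.ext fun x => by
        show ψ (x • a • m) = ψ ((x * a) • m)
        rw [mul_smul] }
  left_inv φ := LinearMap.ext fun m => LinearMap.ext fun a => by
    show φ (a • m) 1 = φ m a
    rw [map_smul, smul_apply, one_mul]
  right_inv ψ := LinearMap.ext fun m => by
    show ψ ((1 : A) • m) = ψ m
    rw [one_smul]

theorem homEquiv_symm_comp (ψ : M₁ →ₗ[R] R) (f : M₂ →ₗ[A] M₁) :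
    homEquiv.symm (ψ ∘ₗ f.restrictScalars R) = homEquiv.symm ψ ∘ₗ f :=
  LinearMap.ext fun m => LinearMap.ext fun a => by
    show ψ (f (a • m)) = ψ (a • f m)
    rw [map_smul]

theorem exists_comp_eq_of_projective_quotient_range {b : M₂ →ₗ[A] M₁}
    (hb : Module.Projective R (M₁ ⧸ LinearMap.range (b.restrictScalars R)))
    (φ : M₂ →ₗ[A] OmegaLeft R A) (hφ : LinearMap.ker b ≤ LinearMap.ker φ) :
    ∃ χ : M₁ →ₗ[A] OmegaLeft R A, χ ∘ₗ b = φ := by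
  have hker : LinearMap.ker (b.restrictScalars R) ≤ LinearMap.ker (homEquiv φ) := fun x hx => by
    show φ x 1 = 0
    rw [LinearMap.mem_ker.mp (hφ hx)]
    rfl
  obtain ⟨ψ, hψ⟩ := LinearMap.exists_comp_eq_of_projective_quotient_range hb _ hker
  exact ⟨homEquiv.symm ψ, by rw [← homEquiv_symm_comp, hψ, Equiv.symm_apply_apply]⟩

end OmegaLeft

theorem CategoryTheory.ProjectiveResolution.subsingleton_extGrp_succ {B : Type} [Ring B]
    {Z : ModuleCat.{0} B} (P : ProjectiveResolution Z) (N : ModuleCat.{0} B) (m : ℕ)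
    (h : ∀ φ : P.complex.X (m + 1) ⟶ N,
      LinearMap.ker (P.complex.d (m + 1) m).hom ≤ LinearMap.ker φ.hom →
        ∃ χ : P.complex.X m ⟶ N, P.complex.d (m + 1) m ≫ χ = φ) :
    Subsingleton (extGrp B Z N (m + 1)) := by
  have hexact : (P.complex.linearYonedaObj ℤ N).ExactAt (m + 1) := by
    rw [HomologicalComplex.exactAt_iff' _ m (m + 1) (m + 2) (by simp) (by simp),
      ShortComplex.moduleCat_exact_iff]
    intro φ hφ
    refine h φ fun x hx => ?_
    obtain ⟨y, rfl⟩ := ((ShortComplex.ShortExact.moduleCat_exact_iff_function_exact _).mp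
      (P.exact_succ m) x).mp hx
    exact congrArg (fun g => g.hom y) hφ
  have : Subsingleton ((P.complex.linearYonedaObj ℤ N).homology (m + 1)) :=
    ModuleCat.isZero_iff_subsingleton.mp
      ((HomologicalComplex.exactAt_iff_isZero_homology _ _).mp hexact)
  exact (P.isoExt (m + 1) N).toLinearEquiv.toEquiv.subsingleton

theorem subsingleton_extGrp_omegaLeft [Module.Finite R A] [Module.Projective R A] (m : ℕ) :
    Subsingleton (extGrp A (ModuleCat.of A (OmegaLeft R A))
      (ModuleCat.of A (OmegaLeft R A)) (m + 1)) := by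
  obtain ⟨P⟩ := HasProjectiveResolution.out (Z := ModuleCat.of A (OmegaLeft R A))
  let (N : ModuleCat.{0} A) : Module R N := Module.compHom N (algebraMap R A)
  have (N : ModuleCat.{0} A) : IsScalarTower R A N :=
    ⟨fun r a x => by
      show (r • a) • x = algebraMap R A r • a • x
      rw [Algebra.smul_def, mul_smul]⟩
  have (n : ℕ) : Module.Projective R (P.complex.X n) := .trans R A _
  have : Module.Projective R (ModuleCat.of A (OmegaLeft R A)) :=
    OmegaLeft.projective_of_linearEquiv (LinearEquiv.refl A (OmegaLeft R A))
  have hπ : Function.Surjective (P.π.f 0) := (ModuleCat.epi_iff_surjective _).mp inferInstance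
  have hdπ : Function.Exact (P.complex.d 1 0) (P.π.f 0) :=
    (ShortComplex.ShortExact.moduleCat_exact_iff_function_exact _).mp
      (ShortComplex.exact_of_g_is_cokernel
        (ShortComplex.mk _ _ P.complex_d_comp_π_f_zero) P.isColimitCokernelCofork)
  have hdd (n : ℕ) : Function.Exact (P.complex.d (n + 2) (n + 1)) (P.complex.d (n + 1) n) :=
    (ShortComplex.ShortExact.moduleCat_exact_iff_function_exact _).mp (P.exact_succ n)
  have hquot := Module.Projective.quotient_range_of_exact (X := fun n => P.complex.X n)
    (M₀ := ModuleCat.of A (OmegaLeft R A))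
    (fun n => (P.complex.d (n + 1) n).hom.restrictScalars R) ((P.π.f 0).hom.restrictScalars R)
    hπ hdπ hdd
  refine P.subsingleton_extGrp_succ _ m fun φ hφ => ?_
  obtain ⟨χ, hχ⟩ := OmegaLeft.exists_comp_eq_of_projective_quotient_range (hquot m) φ.hom hφ
  exact ⟨ModuleCat.ofHom χ, ModuleCat.hom_ext hχ⟩

def OmegaRight.equivOmegaLeftOp : OmegaRight R A ≃ₗ[Aᵐᵒᵖ] OmegaLeft R Aᵐᵒᵖ where
  toFun f := ((f : A →ₗ[R] R) ∘ₗ (MulOpposite.opLinearEquiv R).symm.toLinearMap : Aᵐᵒᵖ →ₗ[R] R)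
  invFun g := ((g : Aᵐᵒᵖ →ₗ[R] R) ∘ₗ (MulOpposite.opLinearEquiv R).toLinearMap : A →ₗ[R] R)
  map_add' _ _ := rfl
  map_smul' _ _ := rfl
  left_inv _ := rfl
  right_inv _ := rfl

theorem subsingleton_extGrp_of_iso {B : Type} [Ring B] {M M' : ModuleCat.{0} B} (e : M ≅ M')
    (n : ℕ) [Subsingleton (extGrp B M' M' n)] : Subsingleton (extGrp B M M n) :=
  let e' : extGrp B M M n ≅ extGrp B M' M' n :=
    ((Ext ℤ (ModuleCat.{0} B) n).obj (Opposite.op M)).mapIso e ≪≫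
      ((Ext ℤ (ModuleCat.{0} B) n).mapIso e.op).symm.app M'
  e'.toLinearEquiv.toEquiv.subsingleton

theorem ext_omega_omega_eq_zero_general
    (R : Type) [CommRing R]
    (A : Type) [Ring A] [Algebra R A] [Module.Finite R A] [Module.Projective R A] :
    (∀ i : ℕ, 1 ≤ i →
      Subsingleton (extGrp A (ModuleCat.of A (OmegaLeft R A))
        (ModuleCat.of A (OmegaLeft R A)) i)) ∧
    (∀ i : ℕ, 1 ≤ i →
      Subsingleton (extGrp Aᵐᵒᵖ (ModuleCat.of Aᵐᵒᵖ (OmegaRight R A))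
        (ModuleCat.of Aᵐᵒᵖ (OmegaRight R A)) i)) := by
  have : Module.Finite R Aᵐᵒᵖ := .equiv (MulOpposite.opLinearEquiv R)
  have : Module.Projective R Aᵐᵒᵖ := .of_equiv (MulOpposite.opLinearEquiv R)
  refine ⟨fun i hi => ?_, fun i hi => ?_⟩ <;> obtain ⟨m, rfl⟩ := Nat.exists_eq_add_of_le' hi
  · exact subsingleton_extGrp_omegaLeft R A m
  · have := subsingleton_extGrp_omegaLeft R Aᵐᵒᵖ m
    exact subsingleton_extGrp_of_iso (OmegaRight.equivOmegaLeftOp R A).toModuleIso _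

theorem ext_omega_omega_eq_zero
    (R : Type) [CommRing R] [IsNoetherianRing R]
    (A : Type) [Ring A] [Algebra R A] [Module.Finite R A] [Module.Projective R A] :
    (∀ i : ℕ, 1 ≤ i →
      Subsingleton (extGrp A (ModuleCat.of A (OmegaLeft R A))
        (ModuleCat.of A (OmegaLeft R A)) i)) ∧
    (∀ i : ℕ, 1 ≤ i →
      Subsingleton (extGrp Aᵐᵒᵖ (ModuleCat.of Aᵐᵒᵖ (OmegaRight R A))
        (ModuleCat.of Aᵐᵒᵖ (OmegaRight R A)) i)) :=
  ext_omega_omega_eq_zero_general R A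

end
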